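/- For any quantum channel T: M_d → M_d, the trace-norm contraction coefficient equals half the maximum over pairs of orthogonal pure states ψ ⊥ φ of ‖T(|ψ⟩⟨ψ| − |φ⟩⟨φ|)‖₁. -/

import Mathlib

open Matrix Kronecker BigOperators
open scoped ComplexOrder

noncomputable section

abbrev Mat (d : ℕ) := Matrix (Fin d) (Fin d) ℂ

section Defs

variable {α β α₁ β₁ α₂ β₂ γ δ : Type*}
variable [Fintype α] [DecidableEq α] [Fintype β] [DecidableEq β]
variable [Fintype α₁] [DecidableEq α₁] [Fintype β₁] [DecidableEq β₁]
variable [Fintype α₂] [DecidableEq α₂] [Fintype β₂] [DecidableEq β₂]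
variable [Fintype γ] [DecidableEq γ] [Fintype δ] [DecidableEq δ]

/-- The Choi matrix of a map on matrices. -/
def choiMatrix (S : Matrix α α ℂ → Matrix β β ℂ) : Matrix (β × α) (β × α) ℂ :=
  ∑ i : α, ∑ j : α, (S (Matrix.single i j 1)) ⊗ₖ (Matrix.single i j 1)

/-- Completely positive (via Choi's theorem). -/
def IsCPMap (S : Matrix α α ℂ → Matrix β β ℂ) : Prop := (choiMatrix S).PosSemidef

/-- Trace preserving. -/
def IsTPMap (S : Matrix α α ℂ → Matrix β β ℂ) : Prop := ∀ X, (S X).trace = X.trace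

/-- A quantum channel: completely positive and trace preserving. -/
def IsQChannel (S : Matrix α α ℂ → Matrix β β ℂ) : Prop := IsCPMap S ∧ IsTPMap S

/-- A density operator. -/
def IsDensity (ρ : Matrix α α ℂ) : Prop := ρ.PosSemidef ∧ ρ.trace = 1

/-- Square root of a positive semidefinite matrix, as `Matrix.PosSemidef.sqrt` was defined
in the older Mathlib (removed since). -/
def psdSqrt {A : Matrix α α ℂ} (hA : A.PosSemidef) : Matrix α α ℂ :=
  (hA.1.eigenvectorUnitary : Matrix α α ℂ) *
    Matrix.diagonal (((↑) : ℝ → ℂ) ∘ Real.sqrt ∘ hA.1.eigenvalues) *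
    (star hA.1.eigenvectorUnitary : Matrix α α ℂ)

/-- Trace norm of a matrix: trace of √(AᴴA). -/
def traceNorm (A : Matrix α α ℂ) : ℝ :=
  ((psdSqrt (Matrix.posSemidef_conjTranspose_mul_self A)).trace).re

/-- Hilbert–Schmidt adjoint of a map on matrices. -/
def hsAdjoint (S : Matrix α α ℂ → Matrix β β ℂ) (X : Matrix β β ℂ) : Matrix α α ℂ :=
  ∑ i : α, ∑ j : α, ((S (Matrix.single i j 1))ᴴ * X).trace • Matrix.single i j 1

/-- Generalized (Moore–Penrose) inverse of `σ^{1/2}`, for Hermitian `σ`,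
via spectral decomposition (and junk value `0` otherwise). -/
def pinvSqrt (σ : Matrix α α ℂ) : Matrix α α ℂ :=
  if hσ : σ.IsHermitian then
    (hσ.eigenvectorUnitary : Matrix α α ℂ) *
      Matrix.diagonal (fun i => (((Real.sqrt (hσ.eigenvalues i))⁻¹ : ℝ) : ℂ)) *
      (star (hσ.eigenvectorUnitary : Matrix α α ℂ))
  else 0

/-- Quantum χ²-divergence `Tr((ρ-σ) σ^{-1/2} (ρ-σ) σ^{-1/2})`. -/
def chiSq (ρ σ : Matrix α α ℂ) : ℝ :=
  (((ρ - σ) * pinvSqrt σ * (ρ - σ) * pinvSqrt σ).trace).re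

/-- Support inclusion `supp ρ ⊆ supp σ` (i.e. `ker σ ⊆ ker ρ`). -/
def SuppIncl (ρ σ : Matrix α α ℂ) : Prop :=
  ∀ v : α → ℂ, σ *ᵥ v = 0 → ρ *ᵥ v = 0

/-- Separable bipartite states. -/
def IsSepState (σ : Matrix (α × β) (α × β) ℂ) : Prop :=
  ∃ (m : ℕ) (p : Fin m → ℝ) (ρA : Fin m → Matrix α α ℂ) (ρB : Fin m → Matrix β β ℂ),
    (∀ i, 0 ≤ p i) ∧ (∑ i, p i = 1) ∧ (∀ i, IsDensity (ρA i)) ∧ (∀ i, IsDensity (ρB i)) ∧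
    σ = ∑ i, (p i : ℂ) • (ρA i ⊗ₖ ρB i)

/-- χ²-divergence to the set of separable states across the cut `α : β`. -/
def chiSqSep (τ : Matrix (α × β) (α × β) ℂ) : ℝ :=
  sInf {r | ∃ σ, IsDensity σ ∧ IsSepState σ ∧ SuppIncl τ σ ∧ r = chiSq τ σ}

/-- Trace-norm contraction coefficient. -/
def etaTr (T : Matrix α α ℂ → Matrix β β ℂ) : ℝ :=
  sSup {r | ∃ ρ σ, IsDensity ρ ∧ IsDensity σ ∧ ρ ≠ σ ∧
    r = traceNorm (T ρ - T σ) / traceNorm (ρ - σ)}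

/-- χ² contraction coefficient. -/
def etaChi (T : Matrix α α ℂ → Matrix β β ℂ) : ℝ :=
  sSup {r | ∃ ρ σ, IsDensity ρ ∧ IsDensity σ ∧ SuppIncl ρ σ ∧ ρ ≠ σ ∧
    r = chiSq (T ρ) (T σ) / chiSq ρ σ}

/-- Minimal eigenvalue of a (Hermitian) matrix. -/
def lamMin (M : Matrix α α ℂ) : ℝ :=
  if h : M.IsHermitian then ⨅ i, h.eigenvalues i else 0

/-- The rank-one projector `|ψ⟩⟨ψ|`. -/
def projVec (ψ : α → ℂ) : Matrix α α ℂ := vecMulVec ψ (star ψ)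

/-- Unit vector (pure state). -/
def IsUnitVec (ψ : α → ℂ) : Prop := star ψ ⬝ᵥ ψ = 1

/-- Partial trace over the second tensor factor. -/
def ptraceSnd (M : Matrix (α × β) (α × β) ℂ) : Matrix α α ℂ :=
  fun i j => ∑ e : β, M (i, e) (j, e)

-- Square root of a positive semidefinite matrix (junk value `0` otherwise).
open Classical in
def matSqrt (ρ : Matrix α α ℂ) : Matrix α α ℂ :=
  if h : ρ.PosSemidef then psdSqrt h else 0

/-- Fidelity `F(ρ,σ) = ‖√ρ √σ‖₁²`. -/
def fidelity (ρ σ : Matrix α α ℂ) : ℝ := (traceNorm (matSqrt ρ * matSqrt σ))^2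

/-- Tensor (Kronecker) product of two maps on matrices. -/
def mapKron (S₁ : Matrix α α ℂ → Matrix α α ℂ) (S₂ : Matrix β β ℂ → Matrix β β ℂ)
    (M : Matrix (α × β) (α × β) ℂ) : Matrix (α × β) (α × β) ℂ :=
  fun r c => ∑ i, ∑ j, ∑ k, ∑ l,
    S₁ (Matrix.single i j 1) r.1 c.1 * S₂ (Matrix.single k l 1) r.2 c.2 * M (i, k) (j, l)

/-- Induced trace norm of a map on matrices. -/
def indTraceNorm (L : Matrix α α ℂ → Matrix β β ℂ) : ℝ :=
  sSup {r | ∃ X, traceNorm X ≤ 1 ∧ r = traceNorm (L X)}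

/-- Entanglement-breaking map: Kraus representation with rank-one Kraus operators. -/
def IsEntanglementBreaking (S : Matrix α α ℂ → Matrix β β ℂ) : Prop :=
  ∃ (m : ℕ) (K : Fin m → Matrix β α ℂ),
    (∀ i, (K i).rank ≤ 1) ∧ (∑ i, (K i)ᴴ * K i = 1) ∧ ∀ X, S X = ∑ i, K i * X * (K i)ᴴ

/-- Unitary channel `X ↦ U X Uᴴ`. -/
def IsUnitaryChannel (S : Matrix α α ℂ → Matrix α α ℂ) : Prop :=
  ∃ U : Matrix α α ℂ, U ∈ Matrix.unitaryGroup α ℂ ∧ ∀ X, S X = U * X * Uᴴ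

/-- Separable bipartite channel: Kraus operators of tensor product form. -/
def IsSepChannel (T : Matrix (α₁ × β₁) (α₁ × β₁) ℂ → Matrix (α₂ × β₂) (α₂ × β₂) ℂ) : Prop :=
  ∃ (m : ℕ) (KA : Fin m → Matrix α₂ α₁ ℂ) (KB : Fin m → Matrix β₂ β₁ ℂ),
    (∑ i, (KA i ⊗ₖ KB i)ᴴ * (KA i ⊗ₖ KB i) = 1) ∧
    ∀ X, T X = ∑ i, (KA i ⊗ₖ KB i) * X * (KA i ⊗ₖ KB i)ᴴ

/-- `Id_{γ} ⊗ T ⊗ Id_{δ}` in the arrangement `(γ × α) × (β × δ)`. -/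
def idTensorMap (T : Matrix (α₁ × β₁) (α₁ × β₁) ℂ → Matrix (α₂ × β₂) (α₂ × β₂) ℂ)
    (M : Matrix ((γ × α₁) × (β₁ × δ)) ((γ × α₁) × (β₁ × δ)) ℂ) :
    Matrix ((γ × α₂) × (β₂ × δ)) ((γ × α₂) × (β₂ × δ)) ℂ :=
  fun r c => ∑ a₁ : α₁, ∑ b₁ : β₁, ∑ a₁' : α₁, ∑ b₁' : β₁,
    T (Matrix.single (a₁, b₁) (a₁', b₁') 1) (r.1.2, r.2.1) (c.1.2, c.2.1) *
      M ((r.1.1, a₁), (b₁, r.2.2)) ((c.1.1, a₁'), (b₁', c.2.2))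

end Defs

/-- `n`-fold tensor power of a map on `d×d` matrices. -/
def tpow {d : ℕ} (S : Mat d → Mat d) (n : ℕ)
    (X : Matrix (Fin n → Fin d) (Fin n → Fin d) ℂ) :
    Matrix (Fin n → Fin d) (Fin n → Fin d) ℂ :=
  fun f g => ∑ f', ∑ g', X f' g' * ∏ k, S (Matrix.single (f' k) (g' k) 1) (f k) (g k)

/-- `n`-fold Kronecker tensor power of a matrix. -/
def matTpow {d : ℕ} (A : Mat d) (n : ℕ) : Matrix (Fin n → Fin d) (Fin n → Fin d) ℂ :=
  fun f g => ∏ k, A (f k) (g k)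

/-- A cc-qq state `Σ_{x,y} p_{xy} |x⟩⟨x|_X ⊗ |y⟩⟨y|_Y ⊗ ρ^{xy}_{AB}`,
arranged across the cut `(X,A) : (B,Y)`. -/
def ccqqState {dX dY dA dB : ℕ} (p : Fin dX → Fin dY → ℝ)
    (ρ : Fin dX → Fin dY → Matrix (Fin dA × Fin dB) (Fin dA × Fin dB) ℂ) :
    Matrix ((Fin dX × Fin dA) × (Fin dB × Fin dY)) ((Fin dX × Fin dA) × (Fin dB × Fin dY)) ℂ :=
  fun r c => if r.1.1 = c.1.1 ∧ r.2.2 = c.2.2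
    then (p r.1.1 r.2.2 : ℂ) * ρ r.1.1 r.2.2 (r.1.2, r.2.1) (c.1.2, c.2.1) else 0



set_option maxHeartbeats 1000000
section Chunk12
variable {n : Type*} [Fintype n] [DecidableEq n]

open scoped MatrixOrder in
lemma psdSqrt_eq_cfcSqrt {A : Matrix n n ℂ} (hA : A.PosSemidef) : psdSqrt hA = CFC.sqrt A := by
  rw [CFC.sqrt_eq_cfc, cfc_nnreal_eq_real _ A, hA.1.cfc_eq]
  simp only [IsHermitian.cfc, Unitary.conjStarAlgAut_apply, psdSqrt]
  congr 2
  funext i j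
  simp [diagonal_apply, Real.coe_sqrt, Real.coe_toNNReal', max_eq_left (hA.eigenvalues_nonneg i)]

open scoped MatrixOrder in
lemma psdSqrt_posSemidef {A : Matrix n n ℂ} (hA : A.PosSemidef) : (psdSqrt hA).PosSemidef := by
  rw [psdSqrt_eq_cfcSqrt]
  exact Matrix.nonneg_iff_posSemidef.mp (CFC.sqrt_nonneg A)

open scoped MatrixOrder in
lemma psdSqrt_sq {A : Matrix n n ℂ} (hA : A.PosSemidef) : (psdSqrt hA) ^ 2 = A := by
  rw [psdSqrt_eq_cfcSqrt]
  exact CFC.sq_sqrt A hA.nonneg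

open scoped MatrixOrder in
lemma psd_eq_sqrt_of_sq_eq {B : Matrix n n ℂ} (hB : B.PosSemidef) (A : Matrix n n ℂ)
    {hA : A.PosSemidef} (h : B ^ 2 = A) : B = psdSqrt hA := by
  rw [psdSqrt_eq_cfcSqrt, eq_comm, CFC.sqrt_eq_iff A B hA.nonneg hB.nonneg, ← sq, h]

lemma sqrtCongr {M N : Matrix n n ℂ} (hM : M.PosSemidef) (hN : N.PosSemidef) (h : M = N) :
    psdSqrt hM = psdSqrt hN := by subst h; rfl

lemma traceNorm_eq_of {A B : Matrix n n ℂ} (h : Aᴴ * A = Bᴴ * B) :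
    traceNorm A = traceNorm B := by
  unfold traceNorm
  rw [sqrtCongr (Matrix.posSemidef_conjTranspose_mul_self A)
    (Matrix.posSemidef_conjTranspose_mul_self B) h]

section herm
variable {A : Matrix n n ℂ} (hA : A.IsHermitian)

lemma unitary_mul_diag_mul_star (U : Matrix n n ℂ) (hU : star U * U = 1) (s t : n → ℂ) :
    (U * diagonal s * star U) * (U * diagonal t * star U) =
      U * diagonal (fun i => s i * t i) * star U := by
  have : U * diagonal s * star U * (U * diagonal t * star U)
      = U * (diagonal s * (star U * U) * diagonal t) * star U := by
    simp only [Matrix.mul_assoc]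
  rw [this, hU, Matrix.mul_one, diagonal_mul_diagonal]

lemma trace_unitary_conj (U : Matrix n n ℂ) (hU : star U * U = 1) (s : n → ℂ) :
    (U * diagonal s * star U).trace = ∑ i, s i := by
  rw [Matrix.trace_mul_comm, ← Matrix.mul_assoc, hU, Matrix.one_mul, Matrix.trace_diagonal]

lemma psd_unitary_conj (U : Matrix n n ℂ) (f : n → ℝ) (hf : ∀ i, 0 ≤ f i) :
    Matrix.PosSemidef (U * diagonal (fun i => (f i : ℂ)) * star U) := by
  have h1 : Matrix.PosSemidef (diagonal (fun i => (f i : ℂ))) :=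
    Matrix.PosSemidef.diagonal (fun i => by
      simpa using (Complex.zero_le_real (x := f i)).2 (hf i))
  exact h1.mul_mul_conjTranspose_same U

lemma star_unitary_mul_self : star (hA.eigenvectorUnitary : Matrix n n ℂ) *
    (hA.eigenvectorUnitary : Matrix n n ℂ) = 1 :=
  Matrix.mem_unitaryGroup_iff'.mp (hA.eigenvectorUnitary).2

lemma unitary_mul_self_star : (hA.eigenvectorUnitary : Matrix n n ℂ) *
    star (hA.eigenvectorUnitary : Matrix n n ℂ) = 1 :=
  Matrix.mem_unitaryGroup_iff.mp (hA.eigenvectorUnitary).2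

lemma spectral' : A = (hA.eigenvectorUnitary : Matrix n n ℂ) *
    diagonal (fun i => (hA.eigenvalues i : ℂ)) * star (hA.eigenvectorUnitary : Matrix n n ℂ) :=
  hA.spectral_theorem

lemma traceNorm_herm : traceNorm A = ∑ i, |hA.eigenvalues i| := by
  set U := (hA.eigenvectorUnitary : Matrix n n ℂ) with hUdef
  have hU : star U * U = 1 := star_unitary_mul_self hA
  set e := hA.eigenvalues with hedef
  have hAA : Aᴴ * A = U * diagonal (fun i => ((|e i| : ℝ) : ℂ) * ((|e i| : ℝ) : ℂ)) * star U := by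
    rw [hA.eq]
    calc A * A = (U * diagonal (fun i => (e i : ℂ)) * star U) *
          (U * diagonal (fun i => (e i : ℂ)) * star U) := by rw [← spectral' hA]
      _ = _ := by
          rw [unitary_mul_diag_mul_star U hU]
          have : (fun i => ((e i : ℂ)) * ((e i : ℂ))) = fun i => ((|e i| : ℝ) : ℂ) * ((|e i| : ℝ) : ℂ) := by
            funext i
            rw [← Complex.ofReal_mul, ← Complex.ofReal_mul, abs_mul_abs_self]
          rw [this]
  have hR : psdSqrt (Matrix.posSemidef_conjTranspose_mul_self A)
      = U * diagonal (fun i => ((|e i| : ℝ) : ℂ)) * star U := by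
    symm
    apply psd_eq_sqrt_of_sq_eq (psd_unitary_conj U _ (fun i => abs_nonneg _))
    rw [pow_two, unitary_mul_diag_mul_star U hU, ← hAA]
  unfold traceNorm
  rw [hR, trace_unitary_conj U hU]
  simp

end herm

lemma traceNorm_herm_nonneg {A : Matrix n n ℂ} (hA : A.IsHermitian) : 0 ≤ traceNorm A := by
  rw [traceNorm_herm hA]
  exact Finset.sum_nonneg fun i _ => abs_nonneg _

lemma isHermitian_smul_real {A : Matrix n n ℂ} (hA : A.IsHermitian) (c : ℝ) :
    ((c : ℂ) • A).IsHermitian := by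
  unfold Matrix.IsHermitian
  rw [Matrix.conjTranspose_smul, hA.eq, Complex.star_def, Complex.conj_ofReal]

lemma isHermitian_sum {ι : Type*} (s : Finset ι) (f : ι → Matrix n n ℂ)
    (h : ∀ i ∈ s, (f i).IsHermitian) : (∑ i ∈ s, f i).IsHermitian := by
  unfold Matrix.IsHermitian
  rw [Matrix.conjTranspose_sum]
  exact Finset.sum_congr rfl fun i hi => (h i hi).eq

lemma traceNorm_smul (c : ℝ) (hc : 0 ≤ c) (A : Matrix n n ℂ) :
    traceNorm ((c : ℂ) • A) = c * traceNorm A := by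
  have hpsd := Matrix.posSemidef_conjTranspose_mul_self A
  have hs : Matrix.PosSemidef ((c : ℂ) • psdSqrt hpsd) := by
    refine Matrix.PosSemidef.of_dotProduct_mulVec_nonneg ?_ ?_
    · exact isHermitian_smul_real (psdSqrt_posSemidef hpsd).1 c
    · intro x
      rw [Matrix.smul_mulVec, dotProduct_smul, smul_eq_mul]
      exact mul_nonneg (by exact_mod_cast hc) ((psdSqrt_posSemidef hpsd).dotProduct_mulVec_nonneg x)
  have heq : psdSqrt (Matrix.posSemidef_conjTranspose_mul_self ((c : ℂ) • A))
      = (c : ℂ) • psdSqrt hpsd := by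
    symm
    apply psd_eq_sqrt_of_sq_eq hs
    rw [smul_pow, psdSqrt_sq hpsd, Matrix.conjTranspose_smul, Matrix.smul_mul, Matrix.mul_smul,
      smul_smul, Complex.star_def, Complex.conj_ofReal, pow_two]
  unfold traceNorm
  rw [heq, Matrix.trace_smul, smul_eq_mul, Complex.re_ofReal_mul]

lemma traceNorm_posSemidef {A : Matrix n n ℂ} (hA : A.PosSemidef) :
    traceNorm A = A.trace.re := by
  have heq : psdSqrt (Matrix.posSemidef_conjTranspose_mul_self A) = A := by
    symm
    apply psd_eq_sqrt_of_sq_eq hA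
    rw [pow_two, hA.1.eq]
  unfold traceNorm
  rw [heq]

lemma trace_diag_mul (d : n → ℂ) (M : Matrix n n ℂ) :
    (diagonal d * M).trace = ∑ i, d i * M i i := by
  simp [Matrix.trace, Matrix.diag, Matrix.diagonal_mul]

lemma trace_conj_mul (U M : Matrix n n ℂ) (d : n → ℂ) :
    ((U * diagonal d * star U) * M).trace = ∑ i, d i * ((star U * M * U) i i) := by
  rw [Matrix.mul_assoc (U * diagonal d), Matrix.trace_mul_comm, ← Matrix.mul_assoc,
    Matrix.trace_mul_comm, trace_diag_mul]

lemma diag_entry_conj (U X : Matrix n n ℂ) (i : n) :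
    (star U * X * U) i i = star (fun a => U a i) ⬝ᵥ (X *ᵥ (fun a => U a i)) := by
  simp only [Matrix.mul_apply, Matrix.mulVec, dotProduct, Pi.star_apply,
    Matrix.star_apply, RCLike.star_def]
  calc ∑ x, (∑ y, (starRingEnd ℂ) (U y i) * X y x) * U x i
      = ∑ x, ∑ y, (starRingEnd ℂ) (U y i) * (X y x * U x i) := by
        refine Finset.sum_congr rfl fun x _ => ?_
        rw [Finset.sum_mul]
        exact Finset.sum_congr rfl fun y _ => by ring
    _ = ∑ y, ∑ x, (starRingEnd ℂ) (U y i) * (X y x * U x i) := Finset.sum_comm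
    _ = ∑ y, (starRingEnd ℂ) (U y i) * ∑ x, X y x * U x i :=
        Finset.sum_congr rfl fun y _ => (Finset.mul_sum _ _ _).symm

lemma col_dot_col (U : Matrix n n ℂ) (hU : star U * U = 1) (i : n) :
    star (fun a => U a i) ⬝ᵥ (fun a => U a i) = 1 := by
  have h : (star U * U) i i = (1 : Matrix n n ℂ) i i := by rw [hU]
  simpa [Matrix.mul_apply, dotProduct, Matrix.star_apply, Matrix.one_apply] using h

lemma re_trace_mul_le {A : Matrix n n ℂ} (hA : A.IsHermitian) (X : Matrix n n ℂ)
    (hX : ∀ v : n → ℂ, ‖star v ⬝ᵥ (X *ᵥ v)‖ ≤ (star v ⬝ᵥ v).re) :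
    ((A * X).trace).re ≤ traceNorm A := by
  set U := (hA.eigenvectorUnitary : Matrix n n ℂ) with hUdef
  have hU : star U * U = 1 := star_unitary_mul_self hA
  set e := hA.eigenvalues with hedef
  have hspec : A = U * diagonal (fun i => (e i : ℂ)) * star U := spectral' hA
  have h1 : (A * X).trace = ∑ i, (e i : ℂ) * ((star U * X * U) i i) := by
    calc (A * X).trace = ((U * diagonal (fun i => (e i : ℂ)) * star U) * X).trace := by
          rw [← hspec]
      _ = _ := trace_conj_mul U X _
  have h2 : ∀ i, ‖(star U * X * U) i i‖ ≤ 1 := by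
    intro i
    rw [diag_entry_conj]
    refine (hX _).trans ?_
    rw [col_dot_col U hU]
    simp
  calc ((A * X).trace).re = ∑ i, (e i) * ((star U * X * U) i i).re := by
        rw [h1, Complex.re_sum]
        exact Finset.sum_congr rfl fun i _ => Complex.re_ofReal_mul _ _
    _ ≤ ∑ i, |e i| := by
        refine Finset.sum_le_sum fun i _ => ?_
        calc e i * ((star U * X * U) i i).re ≤ |e i * ((star U * X * U) i i).re| := le_abs_self _
          _ = |e i| * |((star U * X * U) i i).re| := abs_mul _ _
          _ ≤ |e i| * 1 := by
              refine mul_le_mul_of_nonneg_left ?_ (abs_nonneg _)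
              exact (Complex.abs_re_le_norm _).trans (h2 i)
          _ = |e i| := mul_one _
    _ = traceNorm A := (traceNorm_herm hA).symm

lemma exists_dual_herm {A : Matrix n n ℂ} (hA : A.IsHermitian) : ∃ X : Matrix n n ℂ,
    (∀ v, ‖star v ⬝ᵥ (X *ᵥ v)‖ ≤ (star v ⬝ᵥ v).re) ∧
    ((A * X).trace).re = traceNorm A := by
  set U := (hA.eigenvectorUnitary : Matrix n n ℂ) with hUdef
  have hU : star U * U = 1 := star_unitary_mul_self hA
  have hU2 : U * star U = 1 := unitary_mul_self_star hA
  set e := hA.eigenvalues with hedef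
  have hspec : A = U * diagonal (fun i => (e i : ℂ)) * star U := spectral' hA
  set s : n → ℂ := fun i => if e i < 0 then (-1 : ℂ) else 1 with hsdef
  refine ⟨U * diagonal s * star U, ?_, ?_⟩
  · intro v
    have hw : star v ⬝ᵥ ((U * diagonal s * star U) *ᵥ v)
        = star (star U *ᵥ v) ⬝ᵥ (diagonal s *ᵥ (star U *ᵥ v)) := by
      rw [← Matrix.mulVec_mulVec, ← Matrix.mulVec_mulVec, Matrix.dotProduct_mulVec]
      congr 1
      rw [Matrix.star_mulVec, Matrix.star_eq_conjTranspose U, Matrix.conjTranspose_conjTranspose]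
    set w := star U *ᵥ v with hwdef
    have hww : star w ⬝ᵥ w = star v ⬝ᵥ v := by
      have hU2' : U * Uᴴ = 1 := hU2
      rw [hwdef, Matrix.star_mulVec, ← Matrix.dotProduct_mulVec, Matrix.mulVec_mulVec,
        Matrix.star_eq_conjTranspose U, Matrix.conjTranspose_conjTranspose, hU2',
        Matrix.one_mulVec]
    rw [hw]
    have hdot : star w ⬝ᵥ (diagonal s *ᵥ w) = ∑ i, s i * ((starRingEnd ℂ) (w i) * w i) := by
      simp only [dotProduct, Matrix.mulVec_diagonal, Pi.star_apply, RCLike.star_def]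
      exact Finset.sum_congr rfl fun i _ => by ring
    rw [hdot]
    calc ‖∑ i, s i * ((starRingEnd ℂ) (w i) * w i)‖
        ≤ ∑ i, ‖s i * ((starRingEnd ℂ) (w i) * w i)‖ :=
          norm_sum_le _ _
      _ = ∑ i, Complex.normSq (w i) := by
          refine Finset.sum_congr rfl fun i _ => ?_
          rw [norm_mul]
          have hs1 : ‖s i‖ = 1 := by
            rw [hsdef]; dsimp only; split <;> simp
          rw [hs1, one_mul, mul_comm ((starRingEnd ℂ) (w i)) (w i), Complex.mul_conj]
          simp [Complex.normSq_nonneg]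
      _ = (star w ⬝ᵥ w).re := by
          rw [dotProduct, Complex.re_sum]
          refine Finset.sum_congr rfl fun i _ => ?_
          simp [mul_comm, Complex.mul_conj]
      _ = (star v ⬝ᵥ v).re := by rw [hww]
  · have hAX : A * (U * diagonal s * star U)
        = U * diagonal (fun i => (e i : ℂ) * s i) * star U := by
      rw [hspec, unitary_mul_diag_mul_star U hU]
    rw [hAX, trace_unitary_conj U hU]
    have : ∀ i, (e i : ℂ) * s i = ((|e i| : ℝ) : ℂ) := by
      intro i
      rw [hsdef]
      dsimp only
      split
      · rename_i h; rw [abs_of_neg h]; push_cast; ring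
      · rename_i h; rw [abs_of_nonneg (not_lt.mp h)]; ring
    rw [Finset.sum_congr rfl fun i _ => this i, traceNorm_herm hA]
    simp
    rfl

lemma traceNorm_add_herm {A B : Matrix n n ℂ} (hA : A.IsHermitian) (hB : B.IsHermitian) :
    traceNorm (A + B) ≤ traceNorm A + traceNorm B := by
  obtain ⟨X, hX1, hX2⟩ := exists_dual_herm (hA.add hB)
  rw [← hX2, Matrix.add_mul, Matrix.trace_add, Complex.add_re]
  exact add_le_add (re_trace_mul_le hA X hX1) (re_trace_mul_le hB X hX1)

lemma traceNorm_sum_smul_le {ι : Type*} (s : Finset ι) (c : ι → ℝ) (A : ι → Matrix n n ℂ)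
    (hc : ∀ i ∈ s, 0 ≤ c i) (hh : ∀ i ∈ s, (A i).IsHermitian) :
    traceNorm (∑ i ∈ s, (c i : ℂ) • A i) ≤ ∑ i ∈ s, c i * traceNorm (A i) := by
  classical
  induction s using Finset.induction_on with
  | empty =>
      simp only [Finset.sum_empty]
      rw [traceNorm_posSemidef Matrix.PosSemidef.zero]
      simp
  | insert a t hmem ih =>
      rw [Finset.sum_insert hmem, Finset.sum_insert hmem]
      have h1 : traceNorm ((c a : ℂ) • A a + ∑ i ∈ t, (c i : ℂ) • A i)
          ≤ traceNorm ((c a : ℂ) • A a) + traceNorm (∑ i ∈ t, (c i : ℂ) • A i) := by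
        refine traceNorm_add_herm (isHermitian_smul_real (hh a (Finset.mem_insert_self a t)) _) ?_
        exact isHermitian_sum t _ fun i hi =>
          isHermitian_smul_real (hh i (Finset.mem_insert_of_mem hi)) _
      refine h1.trans (add_le_add ?_ ?_)
      · rw [traceNorm_smul _ (hc a (Finset.mem_insert_self a t))]
      · exact ih (fun i hi => hc i (Finset.mem_insert_of_mem hi))
          (fun i hi => hh i (Finset.mem_insert_of_mem hi))

end Chunk12


section Chunk3
variable {n m : Type*} [Fintype n] [DecidableEq n] [Fintype m] [DecidableEq m]

lemma projVec_apply (ψ : n → ℂ) (a b : n) :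
    projVec ψ a b = ψ a * (starRingEnd ℂ) (ψ b) := rfl

lemma projVec_isHermitian (ψ : n → ℂ) : (projVec ψ).IsHermitian := by
  ext a b
  simp [projVec, Matrix.conjTranspose_apply, vecMulVec_apply, mul_comm]

lemma projVec_mulVec (ψ v : n → ℂ) : projVec ψ *ᵥ v = (star ψ ⬝ᵥ v) • ψ := by
  funext a
  simp only [projVec, Matrix.mulVec, dotProduct, vecMulVec_apply, Pi.smul_apply,
    Pi.star_apply, RCLike.star_def, smul_eq_mul, Finset.sum_mul]
  exact Finset.sum_congr rfl fun b _ => by ring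

lemma star_dot_comm (ψ v : n → ℂ) : star v ⬝ᵥ ψ = (starRingEnd ℂ) (star ψ ⬝ᵥ v) := by
  simp only [dotProduct, Pi.star_apply, RCLike.star_def, map_sum, _root_.map_mul,
    Complex.conj_conj]
  exact Finset.sum_congr rfl fun b _ => by ring

lemma projVec_quad (ψ v : n → ℂ) :
    star v ⬝ᵥ (projVec ψ *ᵥ v) = star (star ψ ⬝ᵥ v) * (star ψ ⬝ᵥ v) := by
  rw [projVec_mulVec, dotProduct_smul, smul_eq_mul, star_dot_comm ψ v,
    RCLike.star_def]
  ring

lemma projVec_posSemidef (ψ : n → ℂ) : (projVec ψ).PosSemidef := by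
  refine Matrix.PosSemidef.of_dotProduct_mulVec_nonneg (projVec_isHermitian ψ) fun v => ?_
  rw [projVec_quad]
  exact star_mul_self_nonneg _

lemma projVec_trace (ψ : n → ℂ) : (projVec ψ).trace = star ψ ⬝ᵥ ψ := by
  simp only [Matrix.trace, Matrix.diag, projVec, vecMulVec_apply, dotProduct,
    Pi.star_apply, RCLike.star_def]
  exact Finset.sum_congr rfl fun a _ => by ring

lemma projVec_mul (ψ φ : n → ℂ) :
    projVec ψ * projVec φ = (star ψ ⬝ᵥ φ) • vecMulVec ψ (star φ) := by
  ext a b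
  simp only [projVec, Matrix.mul_apply, vecMulVec_apply, Matrix.smul_apply, Pi.star_apply,
    RCLike.star_def, smul_eq_mul, dotProduct]
  rw [Finset.sum_mul]
  exact Finset.sum_congr rfl fun k _ => by ring

lemma spectral_sum {A : Matrix n n ℂ} (hA : A.IsHermitian) :
    A = ∑ i, ((hA.eigenvalues i : ℂ)) •
      projVec (fun a => (hA.eigenvectorUnitary : Matrix n n ℂ) a i) := by
  set U := (hA.eigenvectorUnitary : Matrix n n ℂ) with hUdef
  set e := hA.eigenvalues with hedef
  calc A = U * diagonal (fun i => (e i : ℂ)) * star U := spectral' hA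
    _ = _ := by
        ext a b
        rw [Matrix.mul_apply]
        simp only [Matrix.mul_diagonal, Matrix.star_apply, RCLike.star_def, Matrix.sum_apply,
          Matrix.smul_apply, projVec, vecMulVec_apply, Pi.star_apply, smul_eq_mul]
        exact Finset.sum_congr rfl fun i _ => by ring

lemma eigvec_orthonormal {A : Matrix n n ℂ} (hA : A.IsHermitian) (i j : n) :
    star (fun a => (hA.eigenvectorUnitary : Matrix n n ℂ) a i) ⬝ᵥ
      (fun a => (hA.eigenvectorUnitary : Matrix n n ℂ) a j) = if i = j then 1 else 0 := by
  set U := (hA.eigenvectorUnitary : Matrix n n ℂ) with hUdef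
  have h : (star U * U) i j = (1 : Matrix n n ℂ) i j := by rw [star_unitary_mul_self hA]
  simpa [Matrix.mul_apply, dotProduct, Matrix.star_apply, Matrix.one_apply,
    Pi.star_apply] using h

lemma choiMatrix_apply (S : Matrix n n ℂ → Matrix m m ℂ) (i j : n) (b b' : m) :
    choiMatrix S (b, i) (b', j) = S (Matrix.single i j 1) b b' := by
  have hstd : ∀ (i' j' : n), (Matrix.single i' j' (1 : ℂ) : Matrix n n ℂ) i j
      = if i' = i ∧ j' = j then 1 else 0 := fun _ _ => rfl
  unfold choiMatrix
  simp only [Matrix.sum_apply, Matrix.kroneckerMap_apply, hstd]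
  rw [Finset.sum_eq_single i]
  · rw [Finset.sum_eq_single j]
    · simp
    · intro j' _ hj'; simp [hj']
    · intro h; exact absurd (Finset.mem_univ j) h
  · intro i' _ hi'
    exact Finset.sum_eq_zero fun j' _ => by simp [hi']
  · intro h; exact absurd (Finset.mem_univ i) h

lemma lin_eq_sum (T : Matrix n n ℂ →ₗ[ℂ] Matrix m m ℂ) (X : Matrix n n ℂ) :
    T X = ∑ i, ∑ j, X i j • T (Matrix.single i j 1) := by
  conv_lhs => rw [matrix_eq_sum_single X]
  rw [map_sum]
  refine Finset.sum_congr rfl fun i _ => ?_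
  rw [map_sum]
  refine Finset.sum_congr rfl fun j _ => ?_
  rw [← _root_.map_smul, smul_single, smul_eq_mul, mul_one]

lemma cp_herm_preserving (T : Matrix n n ℂ →ₗ[ℂ] Matrix m m ℂ)
    (hC : (choiMatrix ⇑T).IsHermitian) {X : Matrix n n ℂ} (hX : X.IsHermitian) :
    (T X).IsHermitian := by
  have hE : ∀ i j, (T (Matrix.single i j 1))ᴴ = T (Matrix.single j i 1) := by
    intro i j
    ext b b'
    have h1 : (choiMatrix ⇑T)ᴴ (b, j) (b', i) = choiMatrix ⇑T (b, j) (b', i) := by rw [hC.eq]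
    rw [Matrix.conjTranspose_apply] at h1
    rw [choiMatrix_apply, choiMatrix_apply] at h1
    rw [Matrix.conjTranspose_apply]
    exact h1
  have hXe : ∀ i j, (starRingEnd ℂ) (X i j) = X j i := by
    intro i j
    have := congrFun (congrFun hX.eq j) i
    rw [Matrix.conjTranspose_apply] at this
    exact this
  calc (T X)ᴴ = (∑ i, ∑ j, X i j • T (Matrix.single i j 1))ᴴ := by rw [← lin_eq_sum]
    _ = ∑ i, ∑ j, X j i • T (Matrix.single j i 1) := by
        rw [Matrix.conjTranspose_sum]
        refine Finset.sum_congr rfl fun i _ => ?_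
        rw [Matrix.conjTranspose_sum]
        refine Finset.sum_congr rfl fun j _ => ?_
        rw [Matrix.conjTranspose_smul, hE, RCLike.star_def, hXe]
    _ = T X := by
        rw [Finset.sum_comm]
        exact (lin_eq_sum T X).symm

lemma quad_expand (M : Matrix m m ℂ) (w : m → ℂ) :
    star w ⬝ᵥ (M *ᵥ w) = ∑ b, ∑ b', (starRingEnd ℂ) (w b) * M b b' * w b' := by
  simp only [dotProduct, Matrix.mulVec, Pi.star_apply, RCLike.star_def]
  refine Finset.sum_congr rfl fun b _ => ?_
  rw [Finset.mul_sum]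
  exact Finset.sum_congr rfl fun b' _ => by ring

lemma sum_mulVec' {ι : Type*} (s : Finset ι) (M : ι → Matrix m m ℂ) (v : m → ℂ) :
    (∑ i ∈ s, M i) *ᵥ v = ∑ i ∈ s, M i *ᵥ v := by
  funext a
  simp only [Matrix.mulVec, dotProduct, Matrix.sum_apply, Finset.sum_apply,
    Finset.sum_mul]
  exact Finset.sum_comm

lemma dot_sum' {ι : Type*} (s : Finset ι) (f : ι → m → ℂ) (v : m → ℂ) :
    v ⬝ᵥ (∑ i ∈ s, f i) = ∑ i ∈ s, v ⬝ᵥ f i := by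
  simp only [dotProduct, Finset.sum_apply, Finset.mul_sum]
  exact Finset.sum_comm

lemma cp_quad_eq (T : Matrix n n ℂ →ₗ[ℂ] Matrix m m ℂ) (ψ : n → ℂ) (w : m → ℂ) :
    star w ⬝ᵥ (T (projVec ψ) *ᵥ w)
      = star (fun p : m × n => w p.1 * (starRingEnd ℂ) (ψ p.2)) ⬝ᵥ
        (choiMatrix ⇑T *ᵥ (fun p : m × n => w p.1 * (starRingEnd ℂ) (ψ p.2))) := by
  set z : m × n → ℂ := fun p => w p.1 * (starRingEnd ℂ) (ψ p.2) with hzdef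
  have lhs_eq : star w ⬝ᵥ (T (projVec ψ) *ᵥ w)
      = ∑ x : (n × n) × (m × m), projVec ψ x.1.1 x.1.2 *
          ((starRingEnd ℂ) (w x.2.1) * T (Matrix.single x.1.1 x.1.2 1) x.2.1 x.2.2 * w x.2.2) := by
    calc star w ⬝ᵥ (T (projVec ψ) *ᵥ w)
        = ∑ i, ∑ j, projVec ψ i j * (star w ⬝ᵥ (T (Matrix.single i j 1) *ᵥ w)) := by
          rw [lin_eq_sum T (projVec ψ), sum_mulVec', dot_sum']
          refine Finset.sum_congr rfl fun i _ => ?_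
          rw [sum_mulVec', dot_sum']
          refine Finset.sum_congr rfl fun j _ => ?_
          rw [Matrix.smul_mulVec, dotProduct_smul, smul_eq_mul]
      _ = ∑ i, ∑ j, ∑ b, ∑ b', projVec ψ i j *
            ((starRingEnd ℂ) (w b) * T (Matrix.single i j 1) b b' * w b') := by
          refine Finset.sum_congr rfl fun i _ => Finset.sum_congr rfl fun j _ => ?_
          rw [quad_expand, Finset.mul_sum]
          exact Finset.sum_congr rfl fun b _ => by rw [Finset.mul_sum]
      _ = ∑ x : (n × n) × (m × m), projVec ψ x.1.1 x.1.2 *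
            ((starRingEnd ℂ) (w x.2.1) * T (Matrix.single x.1.1 x.1.2 1) x.2.1 x.2.2 * w x.2.2) := by
          symm
          calc ∑ x : (n × n) × (m × m), projVec ψ x.1.1 x.1.2 *
                ((starRingEnd ℂ) (w x.2.1) * T (Matrix.single x.1.1 x.1.2 1) x.2.1 x.2.2 * w x.2.2)
              = ∑ a : n × n, ∑ c : m × m, projVec ψ a.1 a.2 *
                ((starRingEnd ℂ) (w c.1) * T (Matrix.single a.1 a.2 1) c.1 c.2 * w c.2) :=
                Fintype.sum_prod_type _
            _ = ∑ i, ∑ j, ∑ c : m × m, projVec ψ i j *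
                ((starRingEnd ℂ) (w c.1) * T (Matrix.single i j 1) c.1 c.2 * w c.2) :=
                Fintype.sum_prod_type _
            _ = ∑ i, ∑ j, ∑ b, ∑ b', projVec ψ i j *
                ((starRingEnd ℂ) (w b) * T (Matrix.single i j 1) b b' * w b') := by
                refine Finset.sum_congr rfl fun i _ => Finset.sum_congr rfl fun j _ => ?_
                exact Fintype.sum_prod_type _
  have rhs_eq : star z ⬝ᵥ (choiMatrix ⇑T *ᵥ z)
      = ∑ y : (m × n) × (m × n), (starRingEnd ℂ) (z y.1) * choiMatrix ⇑T y.1 y.2 * z y.2 := by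
    rw [quad_expand]
    exact (Fintype.sum_prod_type' _).symm
  rw [lhs_eq, rhs_eq]
  refine Fintype.sum_equiv
    ⟨fun x : (n × n) × (m × m) => ((x.2.1, x.1.1), (x.2.2, x.1.2)),
     fun y : (m × n) × (m × n) => ((y.1.2, y.2.2), (y.1.1, y.2.1)),
     fun x => rfl, fun y => rfl⟩ _ _ ?_
  intro x
  simp only [Equiv.coe_fn_mk, hzdef, choiMatrix_apply, projVec_apply, _root_.map_mul,
    Complex.conj_conj]
  ring

lemma cp_pos_preserving (T : Matrix n n ℂ →ₗ[ℂ] Matrix m m ℂ) (hC : IsCPMap ⇑T)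
    {X : Matrix n n ℂ} (hX : X.PosSemidef) : (T X).PosSemidef := by
  refine Matrix.PosSemidef.of_dotProduct_mulVec_nonneg (cp_herm_preserving T hC.1 hX.1) fun w => ?_
  have key : ∀ ψ : n → ℂ, 0 ≤ star w ⬝ᵥ (T (projVec ψ) *ᵥ w) := by
    intro ψ
    rw [cp_quad_eq]
    exact Matrix.PosSemidef.dotProduct_mulVec_nonneg hC _
  have expand : star w ⬝ᵥ (T X *ᵥ w) = ∑ k, (hX.1.eigenvalues k : ℂ) *
      (star w ⬝ᵥ (T (projVec fun a => (hX.1.eigenvectorUnitary : Matrix n n ℂ) a k) *ᵥ w)) := by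
    calc star w ⬝ᵥ (T X *ᵥ w)
        = star w ⬝ᵥ (T (∑ k, ((hX.1.eigenvalues k : ℂ)) •
            projVec (fun a => (hX.1.eigenvectorUnitary : Matrix n n ℂ) a k)) *ᵥ w) := by
          rw [← spectral_sum hX.1]
      _ = _ := by
          rw [map_sum, sum_mulVec', dot_sum']
          refine Finset.sum_congr rfl fun k _ => ?_
          rw [_root_.map_smul, Matrix.smul_mulVec, dotProduct_smul, smul_eq_mul]
  rw [expand]
  refine Finset.sum_nonneg fun k _ => mul_nonneg ?_ (key _)
  exact_mod_cast hX.eigenvalues_nonneg k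

lemma channel_density (T : Matrix n n ℂ →ₗ[ℂ] Matrix m m ℂ) (hT : IsQChannel ⇑T)
    {ρ : Matrix n n ℂ} (hρ : IsDensity ρ) : IsDensity (T ρ) :=
  ⟨cp_pos_preserving T hT.1 hρ.1, by rw [hT.2]; exact hρ.2⟩

end Chunk3


section Chunk4a
variable {n : Type*} [Fintype n] [DecidableEq n]

lemma traceNorm_neg (A : Matrix n n ℂ) : traceNorm (-A) = traceNorm A :=
  traceNorm_eq_of (by simp)

lemma density_projVec {ψ : n → ℂ} (hψ : IsUnitVec ψ) : IsDensity (projVec ψ) :=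
  ⟨projVec_posSemidef ψ, by rw [projVec_trace]; exact hψ⟩

lemma proj_ne {ψ φ : n → ℂ} (hψ : IsUnitVec ψ) (hφ : IsUnitVec φ)
    (ho : star ψ ⬝ᵥ φ = 0) : projVec ψ ≠ projVec φ := by
  intro h
  have hψ' : star ψ ⬝ᵥ ψ = 1 := hψ
  have h1 : projVec ψ *ᵥ ψ = ψ := by rw [projVec_mulVec, hψ', one_smul]
  have h2 : projVec φ *ᵥ ψ = 0 := by
    rw [projVec_mulVec]
    have hd : star φ ⬝ᵥ ψ = 0 := by rw [star_dot_comm ψ φ, ho, map_zero]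
    rw [hd, zero_smul]
  rw [h, h2] at h1
  rw [← h1] at hψ'
  simp at hψ'

lemma tn_proj_diff (ψ φ : n → ℂ) (hψ : IsUnitVec ψ) (hφ : IsUnitVec φ)
    (ho : star ψ ⬝ᵥ φ = 0) : traceNorm (projVec ψ - projVec φ) = 2 := by
  have hψ' : star ψ ⬝ᵥ ψ = 1 := hψ
  have hφ' : star φ ⬝ᵥ φ = 1 := hφ
  have ho' : star φ ⬝ᵥ ψ = 0 := by rw [star_dot_comm ψ φ, ho, map_zero]
  have hpp : projVec ψ * projVec ψ = projVec ψ := by rw [projVec_mul, hψ', one_smul]; rfl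
  have hqq : projVec φ * projVec φ = projVec φ := by rw [projVec_mul, hφ', one_smul]; rfl
  have hpq : projVec ψ * projVec φ = 0 := by rw [projVec_mul, ho, zero_smul]
  have hqp : projVec φ * projVec ψ = 0 := by rw [projVec_mul, ho', zero_smul]
  have hQ : (projVec ψ - projVec φ)ᴴ * (projVec ψ - projVec φ) = projVec ψ + projVec φ := by
    rw [((projVec_isHermitian ψ).sub (projVec_isHermitian φ)).eq, Matrix.sub_mul,
      Matrix.mul_sub, Matrix.mul_sub, hpp, hqq, hpq, hqp, sub_zero, zero_sub, sub_neg_eq_add]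
  have hQpsd : (projVec ψ + projVec φ).PosSemidef :=
    (projVec_posSemidef ψ).add (projVec_posSemidef φ)
  have hQsq : (projVec ψ + projVec φ) ^ 2
      = (projVec ψ - projVec φ)ᴴ * (projVec ψ - projVec φ) := by
    rw [hQ, pow_two, Matrix.add_mul, Matrix.mul_add, Matrix.mul_add, hpp, hqq, hpq, hqp,
      add_zero, zero_add]
  have hsqrt : psdSqrt (Matrix.posSemidef_conjTranspose_mul_self (projVec ψ - projVec φ))
      = projVec ψ + projVec φ := (psd_eq_sqrt_of_sq_eq hQpsd _ hQsq).symm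
  unfold traceNorm
  rw [hsqrt, Matrix.trace_add, projVec_trace, projVec_trace, hψ', hφ']
  norm_num

lemma tn_T_proj (T : Matrix n n ℂ →ₗ[ℂ] Matrix n n ℂ) (hT : IsQChannel ⇑T)
    {ψ : n → ℂ} (hψ : IsUnitVec ψ) : traceNorm (T (projVec ψ)) = 1 := by
  have hψ' : star ψ ⬝ᵥ ψ = 1 := hψ
  rw [traceNorm_posSemidef (cp_pos_preserving T hT.1 (projVec_posSemidef ψ)), hT.2,
    projVec_trace, hψ', Complex.one_re]

lemma unit_eigvec {A : Matrix n n ℂ} (hA : A.IsHermitian) (i : n) :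
    IsUnitVec (fun a => (hA.eigenvectorUnitary : Matrix n n ℂ) a i) := by
  have := eigvec_orthonormal hA i i
  simpa [IsUnitVec] using this

end Chunk4a


section Chunk4b

lemma max_sub_max_neg (x : ℝ) : max x 0 - max (-x) 0 = x := by
  rcases le_total 0 x with h | h
  · rw [max_eq_left h, max_eq_right (neg_nonpos.mpr h)]; ring
  · rw [max_eq_right h, max_eq_left (neg_nonneg.mpr h)]; ring

lemma abs_eq_max_add_max (x : ℝ) : |x| = max x 0 + max (-x) 0 := by
  rcases le_total 0 x with h | h
  · rw [abs_of_nonneg h, max_eq_left h, max_eq_right (neg_nonpos.mpr h)]; ring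
  · rw [abs_of_nonpos h, max_eq_right h, max_eq_left (neg_nonneg.mpr h)]; ring

lemma key_bound {d : ℕ} (T : Mat d →ₗ[ℂ] Mat d) (hT : IsQChannel ⇑T) (M : ℝ)
    (hM : ∀ ψ φ : Fin d → ℂ, IsUnitVec ψ → IsUnitVec φ → star ψ ⬝ᵥ φ = 0 →
      traceNorm (T (projVec ψ - projVec φ)) ≤ M)
    (ρ σ : Mat d) (hρ : IsDensity ρ) (hσ : IsDensity σ) (hne : ρ ≠ σ) :
    traceNorm (T ρ - T σ) / traceNorm (ρ - σ) ≤ M / 2 := by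
  classical
  have hΔh : (ρ - σ).IsHermitian := hρ.1.1.sub hσ.1.1
  set e := hΔh.eigenvalues with hedef
  have hdec : ρ - σ = ∑ i, (e i : ℂ) •
      projVec (fun a => (hΔh.eigenvectorUnitary : Mat d) a i) := spectral_sum hΔh
  have hΔne : ρ - σ ≠ 0 := sub_ne_zero.mpr hne
  -- trace zero
  have htrace0 : ∑ i, e i = 0 := by
    have h1 : (ρ - σ).trace = 0 := by
      rw [Matrix.trace_sub, hρ.2, hσ.2, sub_self]
    have h2 : (ρ - σ).trace = ∑ i, (e i : ℂ) := by
      rw [hdec, Matrix.trace_sum]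
      refine Finset.sum_congr rfl fun i _ => ?_
      rw [Matrix.trace_smul, projVec_trace]
      have := unit_eigvec hΔh i
      have hu : star (fun a => (hΔh.eigenvectorUnitary : Mat d) a i) ⬝ᵥ
          (fun a => (hΔh.eigenvectorUnitary : Mat d) a i) = 1 := this
      rw [hu, smul_eq_mul, mul_one]
    rw [h1] at h2
    have := congrArg Complex.re h2.symm
    rw [Complex.re_sum] at this
    simpa using this
  set t := ∑ i, max (e i) 0 with htdef
  have hmaxneg : ∑ i, max (-(e i)) 0 = t := by
    have hpt : ∀ i : Fin d, max (-(e i)) 0 = max (e i) 0 - e i := fun i => by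
      have := max_sub_max_neg (e i); linarith
    rw [Finset.sum_congr rfl fun i _ => hpt i, Finset.sum_sub_distrib, htrace0, sub_zero]
  have ht0 : 0 ≤ t := Finset.sum_nonneg fun i _ => le_max_right _ _
  have ht_pos : 0 < t := by
    rcases ht0.lt_or_eq with h | h
    · exact h
    · exfalso
      have hall : ∀ i ∈ Finset.univ, max (e i) 0 = 0 :=
        (Finset.sum_eq_zero_iff_of_nonneg (fun i _ => le_max_right _ _)).1 h.symm
      have hall2 : ∀ i ∈ Finset.univ, max (-(e i)) 0 = 0 := by
        refine (Finset.sum_eq_zero_iff_of_nonneg (fun i _ => le_max_right _ _)).1 ?_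
        rw [hmaxneg, ← h]
      have he0 : ∀ i, e i = 0 := fun i => by
        have h1 : e i ≤ 0 := by
          have := le_max_left (e i) 0; rw [hall i (Finset.mem_univ i)] at this; linarith
        have h2 : 0 ≤ e i := by
          have := le_max_left (-(e i)) 0; rw [hall2 i (Finset.mem_univ i)] at this; linarith
        linarith
      apply hΔne
      rw [hdec]
      exact Finset.sum_eq_zero fun i _ => by rw [he0 i]; simp
  have hsumabs : ∑ i, |e i| = 2 * t := by
    rw [Finset.sum_congr rfl fun i _ => abs_eq_max_add_max (e i), Finset.sum_add_distrib,
      hmaxneg]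
    ring
  have htn : traceNorm (ρ - σ) = 2 * t := by rw [traceNorm_herm hΔh, ← hedef, hsumabs]
  -- coefficients
  set c : Fin d × Fin d → ℝ := fun p => max (e p.1) 0 * max (-(e p.2)) 0 / t with hcdef
  have hc0 : ∀ p, 0 ≤ c p := fun p =>
    div_nonneg (mul_nonneg (le_max_right _ _) (le_max_right _ _)) ht0
  have hrow : ∀ i, ∑ j, c (i, j) = max (e i) 0 := by
    intro i
    calc ∑ j, max (e i) 0 * max (-(e j)) 0 / t
        = ∑ j, max (e i) 0 / t * max (-(e j)) 0 := by
          exact Finset.sum_congr rfl fun j _ => by ring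
      _ = max (e i) 0 / t * ∑ j, max (-(e j)) 0 := by rw [Finset.mul_sum]
      _ = max (e i) 0 / t * t := by rw [hmaxneg]
      _ = max (e i) 0 := by field_simp
  have hcol : ∀ j, ∑ i, c (i, j) = max (-(e j)) 0 := by
    intro j
    calc ∑ i, max (e i) 0 * max (-(e j)) 0 / t
        = ∑ i, max (-(e j)) 0 / t * max (e i) 0 := by
          exact Finset.sum_congr rfl fun i _ => by ring
      _ = max (-(e j)) 0 / t * ∑ i, max (e i) 0 := by rw [Finset.mul_sum]
      _ = max (-(e j)) 0 / t * t := by rw [← htdef]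
      _ = max (-(e j)) 0 := by field_simp
  -- decomposition of T (ρ - σ)
  have hTdec : T (ρ - σ) = ∑ i, (e i : ℂ) •
      T (projVec (fun a => (hΔh.eigenvectorUnitary : Mat d) a i)) := by
    calc T (ρ - σ) = T (∑ i, (e i : ℂ) •
        projVec (fun a => (hΔh.eigenvectorUnitary : Mat d) a i)) := by rw [← hdec]
      _ = _ := by
          rw [map_sum]
          exact Finset.sum_congr rfl fun i _ => by rw [_root_.map_smul]
  have hc1 : ∑ p : Fin d × Fin d, (c p : ℂ) •
      T (projVec (fun a => (hΔh.eigenvectorUnitary : Mat d) a p.1))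
      = ∑ i, ((max (e i) 0 : ℝ) : ℂ) •
        T (projVec (fun a => (hΔh.eigenvectorUnitary : Mat d) a i)) := by
    rw [Fintype.sum_prod_type _]
    refine Finset.sum_congr rfl fun i _ => ?_
    show ∑ y, (c (i, y) : ℂ) •
        T (projVec fun a => (hΔh.eigenvectorUnitary : Mat d) a i) = _
    rw [← Finset.sum_smul, ← Complex.ofReal_sum, hrow i]
  have hc2 : ∑ p : Fin d × Fin d, (c p : ℂ) •
      T (projVec (fun a => (hΔh.eigenvectorUnitary : Mat d) a p.2))
      = ∑ j, ((max (-(e j)) 0 : ℝ) : ℂ) •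
        T (projVec (fun a => (hΔh.eigenvectorUnitary : Mat d) a j)) := by
    rw [Fintype.sum_prod_type _, Finset.sum_comm]
    refine Finset.sum_congr rfl fun j _ => ?_
    show ∑ x, (c (x, j) : ℂ) •
        T (projVec fun a => (hΔh.eigenvectorUnitary : Mat d) a j) = _
    rw [← Finset.sum_smul, ← Complex.ofReal_sum, hcol j]
  have hceq : T (ρ - σ) = ∑ p : Fin d × Fin d, (c p : ℂ) •
      (T (projVec (fun a => (hΔh.eigenvectorUnitary : Mat d) a p.1) -
          projVec (fun a => (hΔh.eigenvectorUnitary : Mat d) a p.2))) := by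
    have hsplit : ∀ p : Fin d × Fin d, (c p : ℂ) •
        (T (projVec (fun a => (hΔh.eigenvectorUnitary : Mat d) a p.1) -
            projVec (fun a => (hΔh.eigenvectorUnitary : Mat d) a p.2)))
        = (c p : ℂ) • T (projVec (fun a => (hΔh.eigenvectorUnitary : Mat d) a p.1))
          - (c p : ℂ) • T (projVec (fun a => (hΔh.eigenvectorUnitary : Mat d) a p.2)) :=
      fun p => by rw [map_sub, smul_sub]
    rw [Finset.sum_congr rfl fun p _ => hsplit p, Finset.sum_sub_distrib, hc1, hc2, hTdec,
      ← Finset.sum_sub_distrib]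
    refine Finset.sum_congr rfl fun i _ => ?_
    rw [← sub_smul, ← Complex.ofReal_sub, max_sub_max_neg]
  -- bound
  have hterm : ∀ p : Fin d × Fin d,
      c p * traceNorm (T (projVec (fun a => (hΔh.eigenvectorUnitary : Mat d) a p.1) -
          projVec (fun a => (hΔh.eigenvectorUnitary : Mat d) a p.2))) ≤ c p * M := by
    intro p
    by_cases hcp : c p = 0
    · rw [hcp, zero_mul, zero_mul]
    · refine mul_le_mul_of_nonneg_left ?_ (hc0 p)
      have hne1 : max (e p.1) 0 ≠ 0 ∧ max (-(e p.2)) 0 ≠ 0 := by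
        by_contra hcon
        apply hcp
        show (e p.1 ⊔ 0) * (-e p.2 ⊔ 0) / t = 0
        rcases not_and_or.mp hcon with h | h
        · rw [not_not.mp h, zero_mul, zero_div]
        · rw [not_not.mp h, mul_zero, zero_div]
      have hpos1 : 0 < e p.1 := by
        rcases (le_max_right (e p.1) 0).lt_or_eq with h | h
        · rw [max_def] at h; split at h <;> [exact absurd h (lt_irrefl 0); exact h]
        · exact absurd h.symm hne1.1
      have hpos2 : e p.2 < 0 := by
        have : 0 < max (-(e p.2)) 0 :=
          (le_max_right _ _).lt_of_ne (Ne.symm hne1.2)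
        rcases lt_max_iff.mp this with h | h
        · linarith
        · exact absurd h (lt_irrefl 0)
      have hij : p.1 ≠ p.2 := fun h => by rw [h] at hpos1; linarith
      refine hM _ _ (unit_eigvec hΔh p.1) (unit_eigvec hΔh p.2) ?_
      have := eigvec_orthonormal hΔh p.1 p.2
      rw [if_neg hij] at this
      exact this
  have hsumc : ∑ p : Fin d × Fin d, c p = t := by
    rw [Fintype.sum_prod_type _]
    rw [Finset.sum_congr rfl fun i _ => hrow i]
  have hbound : traceNorm (T (ρ - σ)) ≤ t * M := by
    calc traceNorm (T (ρ - σ))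
        ≤ ∑ p : Fin d × Fin d, c p *
            traceNorm (T (projVec (fun a => (hΔh.eigenvectorUnitary : Mat d) a p.1) -
              projVec (fun a => (hΔh.eigenvectorUnitary : Mat d) a p.2))) := by
          rw [hceq]
          exact traceNorm_sum_smul_le Finset.univ c _ (fun p _ => hc0 p)
            (fun p _ => cp_herm_preserving T hT.1.1
              ((projVec_isHermitian _).sub (projVec_isHermitian _)))
      _ ≤ ∑ p : Fin d × Fin d, c p * M := Finset.sum_le_sum fun p _ => hterm p
      _ = (∑ p : Fin d × Fin d, c p) * M := (Finset.sum_mul _ _ _).symm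
      _ = t * M := by rw [hsumc]
  have hTsub : T ρ - T σ = T (ρ - σ) := (map_sub T ρ σ).symm
  rw [hTsub, htn]
  have h2t : (0 : ℝ) < 2 * t := by linarith
  calc traceNorm (T (ρ - σ)) / (2 * t) ≤ (t * M) / (2 * t) := by gcongr
    _ = M / 2 := by
        rw [mul_comm 2 t, mul_div_mul_left _ _ (ne_of_gt ht_pos)]

end Chunk4b


/-- `η_tr(T)` equals half the max over orthogonal pure states of
`‖T(|ψ⟩⟨ψ| − |φ⟩⟨φ|)‖₁`. -/
theorem stmt3 {d : ℕ} (hd : 0 < d) (T : Mat d →ₗ[ℂ] Mat d) (hT : IsQChannel ⇑T) :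
    etaTr ⇑T = (1/2) * sSup {r | ∃ ψ φ : Fin d → ℂ, IsUnitVec ψ ∧ IsUnitVec φ ∧
      star ψ ⬝ᵥ φ = 0 ∧ r = traceNorm (T (projVec ψ - projVec φ))} := by
  classical
  set S : Set ℝ := {r | ∃ ψ φ : Fin d → ℂ, IsUnitVec ψ ∧ IsUnitVec φ ∧
      star ψ ⬝ᵥ φ = 0 ∧ r = traceNorm (T (projVec ψ - projVec φ))} with hSdef
  set M : ℝ := sSup S with hMdef
  have hM0 : 0 ≤ M := by
    refine Real.sSup_nonneg fun r hr => ?_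
    obtain ⟨ψ, φ, _, _, _, rfl⟩ := hr
    exact traceNorm_herm_nonneg (cp_herm_preserving T hT.1.1
      ((projVec_isHermitian ψ).sub (projVec_isHermitian φ)))
  have hSbdd : BddAbove S := by
    refine ⟨2, fun r hr => ?_⟩
    obtain ⟨ψ, φ, hψ, hφ, ho, rfl⟩ := hr
    rw [map_sub]
    calc traceNorm (T (projVec ψ) - T (projVec φ))
        ≤ traceNorm (T (projVec ψ)) + traceNorm (-(T (projVec φ))) := by
          rw [sub_eq_add_neg]
          exact traceNorm_add_herm (cp_pos_preserving T hT.1 (projVec_posSemidef ψ)).1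
            ((cp_pos_preserving T hT.1 (projVec_posSemidef φ)).1.neg)
      _ = 2 := by
          rw [traceNorm_neg, tn_T_proj T hT hψ, tn_T_proj T hT hφ]; norm_num
  have hMle : ∀ ψ φ : Fin d → ℂ, IsUnitVec ψ → IsUnitVec φ → star ψ ⬝ᵥ φ = 0 →
      traceNorm (T (projVec ψ - projVec φ)) ≤ M :=
    fun ψ φ hψ hφ ho => le_csSup hSbdd ⟨ψ, φ, hψ, hφ, ho, rfl⟩
  unfold etaTr
  have hub : ∀ x ∈ {r | ∃ ρ σ : Mat d, IsDensity ρ ∧ IsDensity σ ∧ ρ ≠ σ ∧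
      r = traceNorm (T ρ - T σ) / traceNorm (ρ - σ)}, x ≤ M / 2 := by
    rintro x ⟨ρ, σ, hρ, hσ, hne, rfl⟩
    exact key_bound T hT M hMle ρ σ hρ hσ hne
  have hS1bdd : BddAbove {r | ∃ ρ σ : Mat d, IsDensity ρ ∧ IsDensity σ ∧ ρ ≠ σ ∧
      r = traceNorm (T ρ - T σ) / traceNorm (ρ - σ)} := ⟨M / 2, hub⟩
  have hS1nonneg : 0 ≤ sSup {r | ∃ ρ σ : Mat d, IsDensity ρ ∧ IsDensity σ ∧ ρ ≠ σ ∧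
      r = traceNorm (T ρ - T σ) / traceNorm (ρ - σ)} := by
    refine Real.sSup_nonneg fun r hr => ?_
    obtain ⟨ρ, σ, hρ, hσ, _, rfl⟩ := hr
    refine div_nonneg (traceNorm_herm_nonneg ?_) (traceNorm_herm_nonneg (hρ.1.1.sub hσ.1.1))
    exact (cp_pos_preserving T hT.1 hρ.1).1.sub (cp_pos_preserving T hT.1 hσ.1).1
  apply le_antisymm
  · refine (Real.sSup_le hub (by linarith)).trans (le_of_eq (by ring))
  · have hS2le : ∀ r ∈ S, r ≤ 2 * sSup {r | ∃ ρ σ : Mat d, IsDensity ρ ∧ IsDensity σ ∧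
        ρ ≠ σ ∧ r = traceNorm (T ρ - T σ) / traceNorm (ρ - σ)} := by
      rintro r ⟨ψ, φ, hψ, hφ, ho, rfl⟩
      have hmem : traceNorm (T (projVec ψ) - T (projVec φ)) / traceNorm (projVec ψ - projVec φ)
          ∈ {r | ∃ ρ σ : Mat d, IsDensity ρ ∧ IsDensity σ ∧ ρ ≠ σ ∧
            r = traceNorm (T ρ - T σ) / traceNorm (ρ - σ)} :=
        ⟨projVec ψ, projVec φ, density_projVec hψ, density_projVec hφ, proj_ne hψ hφ ho, rfl⟩
      have hle := le_csSup hS1bdd hmem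
      rw [tn_proj_diff ψ φ hψ hφ ho] at hle
      rw [map_sub]
      linarith
    have := Real.sSup_le hS2le (by linarith)
    rw [← hMdef] at this
    linarith

end
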